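/- arXiv:1906.00445 — 2 statements merged into one kernel-verified Lean document; each statement's English description precedes it below -/
import Mathlib

section
/- Suppose the ideal 𝔞 is relatively prime to the ideal (1 − ξ) for every root of unity ξ ≠ 1 in μ. Then for every finite subgroup F' = ⟨(r, ξ)⟩ of R ⋊ μ, there exists a finite subgroup F̃ of 𝔞 ⋊ μ which is conjugate in R ⋊ μ to F'. -/
/-!
Conjugating `(r, ξ)` by `(t, 1)` gives `(r + (1 - ξ) t, ξ)`. If `ξ ≠ 1`, coprimality of `𝔞` and
`(1 - ξ)` lets us write `r = s + (1 - ξ) t` with `s ∈ 𝔞`, so `(r, ξ)` is conjugate to `(s, ξ)`,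
whose powers all lie in `𝔞 ⋊ μ`. If `ξ = 1`, then `(r, 1)` has finite order only for `r = 0`,
since the additive group of `R` is torsion-free.
-/

open SemidirectProduct Subgroup

/-- The monoid homomorphism `AddAut A →* MulAut (Multiplicative A)`. -/
def addAutToMulAut (A : Type*) [AddGroup A] : Multiplicative (AddAut A) →* MulAut (Multiplicative A) where
  toFun e := AddEquiv.toMultiplicative (Multiplicative.toAdd e)
  map_one' := rfl
  map_mul' _ _ := rfl

variable {R : Type*} [CommRing R]

/-- The action of a subgroup `μ ≤ Rˣ` on (the multiplicative version of) the additive group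
of `R`, by multiplication. -/
noncomputable def ringAction (μ : Subgroup Rˣ) : ↥μ →* MulAut (Multiplicative R) :=
  (addAutToMulAut R).comp ((DistribMulAction.toAddAut Rˣ R).comp μ.subtype)

/-- The semidirect product `R ⋊ μ` of the additive group of `R` by a subgroup `μ ≤ Rˣ`
acting by multiplication. -/
noncomputable abbrev RingSemidirect (μ : Subgroup Rˣ) :=
  Multiplicative R ⋊[ringAction μ] ↥μ

open Multiplicative

namespace SemidirectProduct

variable {N G : Type*} [Group N] [Group G] {φ : G →* MulAut N}

theorem left_eq_one_of_isOfFinOrder [IsMulTorsionFree N] {x : N ⋊[φ] G} (hx : IsOfFinOrder x)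
    (hright : x.right = 1) : x.left = 1 := by
  have hx_inl : x = inl x.left := by simpa [hright] using (inl_left_mul_inr_right x).symm
  rw [hx_inl, inl_injective.isOfFinOrder_iff] at hx
  exact hx.eq_one'

end SemidirectProduct

namespace RingSemidirect

variable {μ : Subgroup Rˣ}

theorem toAdd_left_mul (x y : RingSemidirect μ) :
    toAdd (x * y).left = toAdd x.left + ((x.right : Rˣ) : R) * toAdd y.left :=
  rfl

theorem toAdd_left_inv (x : RingSemidirect μ) :
    toAdd x⁻¹.left = -((x.right⁻¹ : μ) : Rˣ) * toAdd x.left := by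
  change ((x.right⁻¹ : μ) : Rˣ) • -toAdd x.left = _
  rw [Units.smul_def, smul_eq_mul, mul_neg, neg_mul]

variable (μ) in
/-- The image of `𝔞 ⋊ μ` in `R ⋊ μ`. -/
noncomputable def idealSubgroup (𝔞 : Ideal R) : Subgroup (RingSemidirect μ) where
  carrier := {x | toAdd x.left ∈ 𝔞}
  one_mem' := 𝔞.zero_mem
  mul_mem' {x _} hx hy := by
    change toAdd (x * _).left ∈ 𝔞
    rw [toAdd_left_mul]
    exact 𝔞.add_mem hx (𝔞.mul_mem_left _ hy)
  inv_mem' {x} hx := by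
    change toAdd x⁻¹.left ∈ 𝔞
    rw [toAdd_left_inv]
    exact 𝔞.mul_mem_left _ hx

theorem mem_idealSubgroup {𝔞 : Ideal R} {x : RingSemidirect μ} :
    x ∈ idealSubgroup μ 𝔞 ↔ toAdd x.left ∈ 𝔞 :=
  Iff.rfl

theorem toAdd_left_conj_inl (t : R) (x : RingSemidirect μ) :
    toAdd (inl (ofAdd t) * x * (inl (ofAdd t))⁻¹).left =
      toAdd x.left + (1 - ((x.right : Rˣ) : R)) * t := by
  simp only [toAdd_left_mul, toAdd_left_inv, left_inl, right_inl, mul_right, inv_one, one_mul,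
    OneMemClass.coe_one, Units.val_one, toAdd_ofAdd]
  ring

theorem exists_conj_mem_idealSubgroup_of_sup_eq_top {𝔞 : Ideal R} {x : RingSemidirect μ}
    (hcop : 𝔞 ⊔ Ideal.span {1 - ((x.right : Rˣ) : R)} = ⊤) :
    ∃ g : RingSemidirect μ, g * x * g⁻¹ ∈ idealSubgroup μ 𝔞 := by
  obtain ⟨s, hs, c, hc, hsc⟩ := Submodule.mem_sup.mp (hcop ▸ Submodule.mem_top (x := toAdd x.left))
  obtain ⟨t, rfl⟩ := Ideal.mem_span_singleton'.mp hc
  refine ⟨inl (ofAdd (-t)), ?_⟩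
  rw [mem_idealSubgroup, toAdd_left_conj_inl, ← hsc]
  convert hs using 1
  ring

theorem exists_conj_mem_idealSubgroup [IsAddTorsionFree R] {𝔞 : Ideal R}
    (hcop : ∀ ξ ∈ μ, ξ ≠ 1 → 𝔞 ⊔ Ideal.span {1 - (ξ : R)} = ⊤) {x : RingSemidirect μ}
    (hx : IsOfFinOrder x) : ∃ g : RingSemidirect μ, g * x * g⁻¹ ∈ idealSubgroup μ 𝔞 := by
  by_cases hξ : x.right = 1
  · refine ⟨1, ?_⟩
    rw [one_mul, inv_one, mul_one, mem_idealSubgroup, left_eq_one_of_isOfFinOrder hx hξ]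
    exact 𝔞.zero_mem
  · exact exists_conj_mem_idealSubgroup_of_sup_eq_top
      (hcop _ x.right.2 fun h ↦ hξ (Subtype.ext h))

end RingSemidirect

theorem finite_subgroup_conjugate_into_ideal_semidirect_general
    [IsDomain R] [CharZero R]
    (ζ : Rˣ) (𝔞 : Ideal R)
    (hcop : ∀ ξ : Rˣ, ξ ∈ zpowers ζ → ξ ≠ 1 → 𝔞 ⊔ Ideal.span {1 - (ξ : R)} = ⊤)
    (r : R) (ξ : ↥(zpowers ζ))
    (hfin : IsOfFinOrder (⟨Multiplicative.ofAdd r, ξ⟩ : RingSemidirect (zpowers ζ))) :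
    ∃ g : RingSemidirect (zpowers ζ),
      ∀ y ∈ Subgroup.map (MulAut.conj g).toMonoidHom
          (zpowers (⟨Multiplicative.ofAdd r, ξ⟩ : RingSemidirect (zpowers ζ))),
        Multiplicative.toAdd y.left ∈ 𝔞 := by
  obtain ⟨g, hg⟩ := RingSemidirect.exists_conj_mem_idealSubgroup hcop hfin
  refine ⟨g, fun y hy ↦ ?_⟩
  rw [MonoidHom.map_zpowers] at hy
  exact zpowers_le.mpr hg hy

/-- Let `R` be the ring of integers of a number field (here: a
characteristic-zero domain), `μ = ⟨ζ⟩ ⊆ R^*` a finite cyclic group of roots of unity acting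
by multiplication, and suppose the ideal `𝔞` is relatively prime to the ideal `(1 − ξ)` for
every root of unity `ξ ≠ 1` in `μ`.  Then for every finite subgroup `F' = ⟨(r, ξ)⟩` of
`R ⋊ μ`, there exists a finite subgroup `F̃` of `𝔞 ⋊ μ` (realized as the subgroup of
elements of `R ⋊ μ` whose first component lies in `𝔞`) which is conjugate in `R ⋊ μ`
to `F'`. -/
theorem finite_subgroup_conjugate_into_ideal_semidirect
    [IsDomain R] [CharZero R]
    (ζ : Rˣ) (hζ : IsOfFinOrder ζ) (𝔞 : Ideal R) (h𝔞 : 𝔞 ≠ ⊥)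
    (hcop : ∀ ξ : Rˣ, ξ ∈ zpowers ζ → ξ ≠ 1 → 𝔞 ⊔ Ideal.span {1 - (ξ : R)} = ⊤)
    (r : R) (ξ : ↥(zpowers ζ))
    (hfin : IsOfFinOrder (⟨Multiplicative.ofAdd r, ξ⟩ : RingSemidirect (zpowers ζ))) :
    ∃ g : RingSemidirect (zpowers ζ),
      ∀ y ∈ Subgroup.map (MulAut.conj g).toMonoidHom
          (zpowers (⟨Multiplicative.ofAdd r, ξ⟩ : RingSemidirect (zpowers ζ))),
        Multiplicative.toAdd y.left ∈ 𝔞 :=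
  finite_subgroup_conjugate_into_ideal_semidirect_general ζ 𝔞 hcop r ξ hfin
end

section
/- Suppose 𝔞 is an ideal of R relatively prime to (1 − ξ) for all 1 ≠ ξ ∈ μ. If r, s ∈ 𝔞 and 1 ≠ ξ ∈ μ with (s, ξ) = (b, a)(r, ξ)(b, a)^{−1} for some (b, a) ∈ R ⋊ μ, then necessarily b ∈ 𝔞, i.e. (r, ξ) and (s, ξ) are already conjugate in 𝔞 ⋊ μ. -/
open SemidirectProduct Subgroup

variable {R : Type*} [CommRing R]

theorem ringAction_apply (μ : Subgroup Rˣ) (g : ↥μ) (x : Multiplicative R) :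
    ringAction μ g x = Multiplicative.ofAdd ((g : Rˣ) • Multiplicative.toAdd x) := rfl

theorem RingSemidirect.conj_left (μ : Subgroup Rˣ) (b r : R) (a ξ : ↥μ) :
    ((⟨Multiplicative.ofAdd b, a⟩ * ⟨Multiplicative.ofAdd r, ξ⟩ *
      (⟨Multiplicative.ofAdd b, a⟩ : RingSemidirect μ)⁻¹ : RingSemidirect μ).left) =
      Multiplicative.ofAdd ((1 - ((ξ : Rˣ) : R)) * b + (a : Rˣ) * r) := by
  apply Multiplicative.toAdd.injective
  simp only [mul_left, mul_right, inv_left, ringAction_apply, Subgroup.coe_mul,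
    Subgroup.coe_inv, toAdd_mul, toAdd_inv, toAdd_ofAdd, smul_smul, Units.smul_def, Units.val_mul]
  -- conjugation by `a` fixes `ξ` because `Rˣ` is commutative
  linear_combination (-(b * ((ξ : Rˣ) : R))) * (a : Rˣ).mul_inv

theorem Ideal.mem_of_mul_mem_of_sup_span_singleton_eq_top {S : Type*} [CommSemiring S]
    {I : Ideal S} {x b : S}
    (h : I ⊔ Ideal.span {x} = ⊤) (hxb : x * b ∈ I) : b ∈ I := by
  refine Submodule.mem_of_span_top_of_smul_mem I (insert x I) ?_ b ?_
  · rw [Ideal.span_insert, Ideal.span_eq, sup_comm, h]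
  · rintro ⟨y, rfl | hy⟩
    exacts [hxb, I.mul_mem_right b hy]

theorem conjugator_lies_in_ideal_semidirect_general
    (μ : Subgroup Rˣ) (𝔞 : Ideal R)
    (hcop : ∀ ξ : Rˣ, ξ ∈ μ → ξ ≠ 1 → 𝔞 ⊔ Ideal.span {1 - (ξ : R)} = ⊤)
    (r s : R) (hr : r ∈ 𝔞) (hs : s ∈ 𝔞) (ξ : ↥μ) (hξ : ξ ≠ 1)
    (b : R) (a : ↥μ)
    (hconj : (⟨Multiplicative.ofAdd s, ξ⟩ : RingSemidirect μ) =
      (⟨Multiplicative.ofAdd b, a⟩ : RingSemidirect μ) * ⟨Multiplicative.ofAdd r, ξ⟩ *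
        (⟨Multiplicative.ofAdd b, a⟩ : RingSemidirect μ)⁻¹) :
    b ∈ 𝔞 := by
  have hs_eq : s = (1 - ((ξ : Rˣ) : R)) * b + (a : Rˣ) * r := by
    have hleft := congrArg left hconj
    rw [RingSemidirect.conj_left] at hleft
    exact Multiplicative.ofAdd.injective hleft
  have hmul : (1 - ((ξ : Rˣ) : R)) * b ∈ 𝔞 := by
    rw [eq_sub_of_add_eq hs_eq.symm]
    exact 𝔞.sub_mem hs (𝔞.mul_mem_left _ hr)
  refine Ideal.mem_of_mul_mem_of_sup_span_singleton_eq_top (hcop ξ ξ.2 ?_) hmul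
  exact_mod_cast hξ

/-- Suppose `𝔞` is an ideal of `R` relatively prime to `(1 − ξ)` for all
`1 ≠ ξ ∈ μ`, where `μ ⊆ R^*` is a finite cyclic group of roots of unity.  If `r, s ∈ 𝔞` and
`1 ≠ ξ ∈ μ` with `(s, ξ) = (b, a)(r, ξ)(b, a)⁻¹` for some `(b, a) ∈ R ⋊ μ`, then necessarily
`b ∈ 𝔞`, i.e. `(r, ξ)` and `(s, ξ)` are already conjugate in `𝔞 ⋊ μ`. -/
theorem conjugator_lies_in_ideal_semidirect
    (μ : Subgroup Rˣ) [Finite μ] [IsCyclic μ] (𝔞 : Ideal R)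
    (hcop : ∀ ξ : Rˣ, ξ ∈ μ → ξ ≠ 1 → 𝔞 ⊔ Ideal.span {1 - (ξ : R)} = ⊤)
    (r s : R) (hr : r ∈ 𝔞) (hs : s ∈ 𝔞) (ξ : ↥μ) (hξ : ξ ≠ 1)
    (b : R) (a : ↥μ)
    (hconj : (⟨Multiplicative.ofAdd s, ξ⟩ : RingSemidirect μ) =
      (⟨Multiplicative.ofAdd b, a⟩ : RingSemidirect μ) * ⟨Multiplicative.ofAdd r, ξ⟩ *
        (⟨Multiplicative.ofAdd b, a⟩ : RingSemidirect μ)⁻¹) :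
    b ∈ 𝔞 :=
  conjugator_lies_in_ideal_semidirect_general μ 𝔞 hcop r s hr hs ξ hξ b a hconj
end
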